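/- Let F be a field of characteristic 2 and L/F an extension of degree 4 with a² ∈ F for all a ∈ L. Let (1, i, j, k = ij) be a basis of L over F and p = 1⊗i + i⊗1, q = 1⊗j + j⊗1, r = pq in L ⊗_F L. Then pr = 0, qr = 0, r² = 0, and the annihilator of the maximal ideal Π = ker π in L ⊗_F L equals the one-dimensional subspace L·r. -/

import Mathlib

/-!
Squares of `L` lie in `F`, so `p² = 1 ⊗ i² + i² ⊗ 1 = 0` in characteristic 2, likewise `q² = 0`,
and `pr`, `qr`, `r²` vanish. A relation `ij = a + bi + cj` multiplied by `i` forces `c² = i²`,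
i.e. `i ∈ F`; so `1, i, j, ij` is an `F`-basis of `L`, and then `1, p, q, pq` spans `L ⊗_F L`
over `L` and, by dimension count, is an `L`-basis. In this basis `L ⊗_F L = L[p, q]/(p², q²)`:
any `L`-algebra map `π` to the reduced ring `L` kills the nilpotents `p, q`, the equations
`gp = gq = 0` force `g ∈ L·pq`, and `pq·z = π(z)·pq`.
-/

open TensorProduct

section SquareZeroPair

variable {R A : Type*} [CommRing R] [CommRing A] [Algebra R A] {p q : A}
  (b : Module.Basis (Fin 4) R A) (hb : ⇑b = ![1, p, q, p * q]) (hp : p * p = 0) (hq : q * q = 0)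
include b hb hp hq

theorem mul_mul_eq_smul_mul (ε : A →ₐ[R] R) (hεp : ε p = 0) (hεq : ε q = 0) (z : A) :
    p * q * z = ε z • (p * q) := by
  suffices LinearMap.mulLeft R (p * q) = ε.toLinearMap.smulRight (p * q) from
    LinearMap.congr_fun this z
  refine b.ext fun m => ?_
  fin_cases m <;> simp [hb, hεp, hεq]
  · linear_combination q * hp
  · linear_combination p * hq
  · linear_combination q * q * hp

theorem exists_eq_smul_mul_of_mul_eq_zero {g : A} (hgp : g * p = 0) (hgq : g * q = 0) :
    ∃ c : R, g = c • (p * q) := by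
  set c := b.repr g
  have hg : g = c 0 • 1 + c 1 • p + c 2 • q + c 3 • (p * q) := by
    simpa [Fin.sum_univ_four, hb] using (b.sum_repr g).symm
  have hgp' : c 0 • p + c 2 • (p * q) = 0 := by
    rw [← hgp, hg]; simp only [Algebra.smul_def]
    linear_combination (-(algebraMap R A (c 1)) - algebraMap R A (c 3) * q) * hp
  have hgq' : c 0 • q + c 1 • (p * q) = 0 := by
    rw [← hgq, hg]; simp only [Algebra.smul_def]
    linear_combination (-(algebraMap R A (c 2)) - algebraMap R A (c 3) * p) * hq
  have hind := Fintype.linearIndependent_iff.mp b.linearIndependent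
  have hp0 := hind ![0, c 0, 0, c 2] (by simpa [Fin.sum_univ_four, hb] using hgp')
  have hq0 := hind ![0, 0, c 0, c 1] (by simpa [Fin.sum_univ_four, hb] using hgq')
  refine ⟨c 3, ?_⟩
  rw [hg, show c 0 = 0 from hp0 1, show c 1 = 0 from hq0 3, show c 2 = 0 from hp0 3]
  simp

theorem forall_mul_eq_zero_of_eq_zero_iff [IsReduced R] (ε : A →ₐ[R] R) (g : A) :
    (∀ z, ε z = 0 → g * z = 0) ↔ ∃ c : R, g = c • (p * q) := by
  have hεp : ε p = 0 := IsNilpotent.eq_zero ⟨2, by rw [sq, ← map_mul, hp, map_zero]⟩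
  have hεq : ε q = 0 := IsNilpotent.eq_zero ⟨2, by rw [sq, ← map_mul, hq, map_zero]⟩
  constructor
  · intro h
    exact exists_eq_smul_mul_of_mul_eq_zero b hb hp hq (h p hεp) (h q hεq)
  · rintro ⟨c, rfl⟩ z hz
    rw [smul_mul_assoc, mul_mul_eq_smul_mul b hb hp hq ε hεp hεq, hz, zero_smul, smul_zero]

end SquareZeroPair

theorem linearIndependent_one_mul_of_sq_mem_range {F L : Type*} [Field F] [Field L] [Algebra F L]
    {i j : L} (hi : i ^ 2 ∈ Set.range (algebraMap F L)) (hij : LinearIndependent F ![1, i, j]) :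
    LinearIndependent F ![1, i, j, i * j] := by
  have hind := Fintype.linearIndependent_iff.mp hij
  have hi_not : i ∉ Set.range (algebraMap F L) := by
    rintro ⟨a, rfl⟩
    have := hind ![a, -1, 0] (by simp [Fin.sum_univ_three, Algebra.smul_def])
    simpa using this 1
  rw [show ![1, i, j, i * j] = Fin.snoc ![1, i, j] (i * j) by
    funext m; fin_cases m <;> rfl]
  refine linearIndependent_finSnoc.mpr ⟨hij, fun hmem => hi_not ?_⟩
  obtain ⟨c, hc⟩ := (Submodule.mem_span_range_iff_exists_fun F).mp hmem
  obtain ⟨f, hf⟩ := hi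
  have hc' : algebraMap F L (c 0) + algebraMap F L (c 1) * i + algebraMap F L (c 2) * j = i * j := by
    simpa [Fin.sum_univ_three, Algebra.smul_def] using hc
  -- multiplying `i * j = c₀ + c₁ i + c₂ j` by `i` gives a second relation among `1, i, j`
  have hrel := hind ![c 1 * f + c 0 * c 2, c 0 + c 1 * c 2, c 2 ^ 2 - f] (by
    simp only [Fin.sum_univ_three, Matrix.cons_val, Algebra.smul_def, map_add, map_mul, map_sub,
      map_pow, hf, mul_one]
    linear_combination (algebraMap F L (c 2) + i) * hc')
  have hc₂ : algebraMap F L (c 2) ^ 2 = algebraMap F L f := by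
    rw [← map_pow, sub_eq_zero.mp (hrel 2)]
  have hsq : (i - algebraMap F L (c 2)) * (i + algebraMap F L (c 2)) = 0 := by
    linear_combination -hf - hc₂
  rcases mul_eq_zero.mp hsq with h | h
  · exact ⟨c 2, by linear_combination -h⟩
  · exact ⟨-c 2, by simp only [map_neg]; linear_combination -h⟩

section TensorSquare

variable {F L : Type*} [Field F] [CommRing L] [Algebra F L]

theorem one_tmul_add_tmul_one_mul_self [CharP F 2] {x : L}
    (hx : x ^ 2 ∈ Set.range (algebraMap F L)) :
    (1 ⊗ₜ[F] x + x ⊗ₜ[F] 1) * (1 ⊗ₜ[F] x + x ⊗ₜ[F] 1) = 0 := by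
  obtain ⟨f, hf⟩ := hx
  have h2 : (2 : L ⊗[F] L) = 0 := by
    rw [← map_ofNat (algebraMap F (L ⊗[F] L)) 2, CharTwo.two_eq_zero, map_zero]
  have hsym : (1 : L) ⊗ₜ[F] (x * x) = (x * x) ⊗ₜ[F] 1 := by
    rw [← sq, ← hf, Algebra.algebraMap_eq_smul_one, smul_tmul]
  simp only [add_mul, mul_add, Algebra.TensorProduct.tmul_mul_tmul, one_mul, mul_one]
  linear_combination hsym + ((x * x) ⊗ₜ[F] (1 : L) + x ⊗ₜ[F] x) * h2

theorem span_one_tmul_add_tmul_one_eq_top {i j : L} {p q : L ⊗[F] L}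
    (hspan : Submodule.span F (Set.range ![1, i, j, i * j]) = ⊤)
    (hp : p = 1 ⊗ₜ[F] i + i ⊗ₜ[F] 1) (hq : q = 1 ⊗ₜ[F] j + j ⊗ₜ[F] 1) :
    Submodule.span L (Set.range ![1, p, q, p * q]) = ⊤ := by
  set S := Submodule.span L (Set.range ![1, p, q, p * q])
  have gen : ∀ m, ![1, p, q, p * q] m ∈ S := fun m => Submodule.subset_span ⟨m, rfl⟩
  have tmul_one : ∀ x : L, x ⊗ₜ[F] (1 : L) = x • 1 := fun x => by
    rw [Algebra.smul_def, mul_one]; rfl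
  have hi : (1 : L) ⊗ₜ[F] i = p - i • 1 := by rw [hp, ← tmul_one, add_sub_cancel_right]
  have hj : (1 : L) ⊗ₜ[F] j = q - j • 1 := by rw [hq, ← tmul_one, add_sub_cancel_right]
  have hij : (1 : L) ⊗ₜ[F] (i * j) = p * q - j • p - i • q + (i * j) • 1 := by
    rw [← one_mul (1 : L), ← Algebra.TensorProduct.tmul_mul_tmul, hi, hj]
    simp only [Algebra.smul_def, map_mul]; ring
  have one_tmul_mem : ∀ y : L, (1 : L) ⊗ₜ[F] y ∈ S := by
    suffices Submodule.span F (Set.range ![1, i, j, i * j]) ≤ (S.restrictScalars F).comap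
        (Algebra.TensorProduct.includeRight (R := F) (A := L)).toLinearMap by
      intro y; exact this (hspan ▸ Submodule.mem_top)
    rw [Submodule.span_le, Set.range_subset_iff]
    intro m
    simp only [SetLike.mem_coe, Submodule.mem_comap, Submodule.restrictScalars_mem,
      AlgHom.toLinearMap_apply, Algebra.TensorProduct.includeRight_apply]
    fin_cases m
    · exact gen 0
    · show (1 : L) ⊗ₜ[F] i ∈ S; rw [hi]; exact S.sub_mem (gen 1) (S.smul_mem i (gen 0))
    · show (1 : L) ⊗ₜ[F] j ∈ S; rw [hj]; exact S.sub_mem (gen 2) (S.smul_mem j (gen 0))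
    · show (1 : L) ⊗ₜ[F] (i * j) ∈ S; rw [hij]
      exact S.add_mem (S.sub_mem (S.sub_mem (gen 3) (S.smul_mem j (gen 1)))
        (S.smul_mem i (gen 2))) (S.smul_mem (i * j) (gen 0))
  rw [Submodule.eq_top_iff']
  intro z
  induction z using TensorProduct.induction_on with
  | zero => exact S.zero_mem
  | tmul x y => rw [← mul_one x, ← smul_eq_mul, ← smul_tmul']; exact S.smul_mem x (one_tmul_mem y)
  | add x y hx hy => exact S.add_mem hx hy

end TensorSquare

theorem stmt9_general (F L : Type*) [Field F] [Field L] [Algebra F L] [CharP F 2]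
    (hdim : Module.finrank F L = 4)
    (hsq : ∀ a : L, ∃ f : F, algebraMap F L f = a ^ 2) (π : (L ⊗[F] L) →ₐ[L] L) (i j : L) (hij : LinearIndependent F ![1, i, j])
    (p q r : L ⊗[F] L)
    (hp : p = 1 ⊗ₜ[F] i + i ⊗ₜ[F] 1) (hq : q = 1 ⊗ₜ[F] j + j ⊗ₜ[F] 1)
    (hr : r = p * q) :
    p * r = 0 ∧ q * r = 0 ∧ r ^ 2 = 0 ∧
    (∀ g : L ⊗[F] L, (∀ z : L ⊗[F] L, π z = 0 → g * z = 0) ↔ ∃ c : L, g = c • r) := by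
  have hspanF : Submodule.span F (Set.range ![1, i, j, i * j]) = ⊤ :=
    (linearIndependent_one_mul_of_sq_mem_range (hsq i) hij).span_eq_top_of_card_eq_finrank
      (by simp [hdim])
  have hpp : p * p = 0 := hp ▸ one_tmul_add_tmul_one_mul_self (hsq i)
  have hqq : q * q = 0 := hq ▸ one_tmul_add_tmul_one_mul_self (hsq j)
  let b : Module.Basis (Fin 4) L (L ⊗[F] L) := basisOfTopLeSpanOfCardEqFinrank ![1, p, q, p * q]
    (span_one_tmul_add_tmul_one_eq_top hspanF hp hq).ge (by simp [hdim])
  subst hr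
  refine ⟨by rw [← mul_assoc, hpp, zero_mul], by rw [mul_left_comm, hqq, mul_zero],
    by rw [mul_pow, sq, sq, hpp, zero_mul], ?_⟩
  exact forall_mul_eq_zero_of_eq_zero_iff b (coe_basisOfTopLeSpanOfCardEqFinrank ..) hpp hqq π

theorem stmt9 (F L : Type*) [Field F] [Field L] [Algebra F L] [CharP F 2]
    (hdim : Module.finrank F L = 4)
    (hsq : ∀ a : L, ∃ f : F, algebraMap F L f = a ^ 2) (π : (L ⊗[F] L) →ₐ[L] L) (hπ : ∀ x y : L, π (x ⊗ₜ[F] y) = x * y) (i j : L) (hij : LinearIndependent F ![1, i, j])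
    (p q r : L ⊗[F] L)
    (hp : p = 1 ⊗ₜ[F] i + i ⊗ₜ[F] 1) (hq : q = 1 ⊗ₜ[F] j + j ⊗ₜ[F] 1)
    (hr : r = p * q) :
    p * r = 0 ∧ q * r = 0 ∧ r ^ 2 = 0 ∧
    (∀ g : L ⊗[F] L, (∀ z : L ⊗[F] L, π z = 0 → g * z = 0) ↔ ∃ c : L, g = c • r) :=
  stmt9_general F L hdim hsq π i j hij p q r hp hq hr
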